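/- arXiv:1807.02369 — 2 statements merged into one kernel-verified Lean document; each statement's English description precedes it below -/
import Mathlib

section
/- Let (W,S) be a Coxeter system, H ⊆ S, s,t ∈ S, and x ∈ ^{{s,t}}W. Then the intersection (W_{{s,t}}·x) ∩ W^H is one of the following five sets: (1) the empty set; (2) the singleton {x}; (3) {g·x : g ∈ W_{{s,t}}, t is not a right descent of g}; (4) {g·x : g ∈ W_{{s,t}}, s is not a right descent of g}; (5) the whole coset W_{{s,t}}·x. -/
/-!
For `x ∈ ^{s,t}W` and `g ∈ W_{s,t}` lengths add: `ℓ(gx) = ℓ(g) + ℓ(x)`. Together with Deodhar's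
lemma (if `w ∈ W^H`, `ℓ(rw) > ℓ(w)` and `rw ∉ W^H`, then `rw = wh` for some `h ∈ H`) this shows,
by induction on `ℓ(g)`, that `gx ∈ W^H` iff `x ∈ W^H` and no `r ∈ {s,t}` with `rx ∉ W^H` is a right
descent of `g`. The five sets are what this condition cuts out when `x ∉ W^H`, and, when
`x ∈ W^H`, for each choice of which of `sx`, `tx` lie in `W^H`; if neither does, only `g = 1`
survives, since every `g ≠ 1` in `W_{s,t}` has a right descent in `{s,t}`.

Both ingredients rest on the strong exchange property, proved with the classical sign cocycle:
`s_i` acts on `W × {±1}` by `(w, ε) ↦ (s_i w s_i, ±ε)` with the sign flipped exactly at `w = s_i`,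
and the sign `(t, 1)` picks up under `w` is `-1` iff `t` is a right inversion of `w`.
-/

open Polynomial

namespace CIKL

variable {B : Type*} {W : Type*} [Group W] {M : CoxeterMatrix B}

/-- The Bruhat order on a Coxeter group: the reflexive-transitive closure of the
Bruhat graph, which has a directed edge from `a` to `b` whenever `b = a * t` for a
reflection `t` and `ℓ(a) < ℓ(b)`. -/
def bruhatLE (cs : CoxeterSystem M W) (u v : W) : Prop :=
  Relation.ReflTransGen
    (fun a b => ∃ t, cs.IsReflection t ∧ b = a * t ∧ cs.length a < cs.length b) u v

/-- Strict Bruhat order. -/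
def bruhatLT (cs : CoxeterSystem M W) (u v : W) : Prop :=
  bruhatLE cs u v ∧ u ≠ v

/-- The cover relation `u ⊲ v` of the Bruhat order. -/
def bruhatCovBy (cs : CoxeterSystem M W) (u v : W) : Prop :=
  bruhatLT cs u v ∧ ∀ z, bruhatLE cs u z → bruhatLE cs z v → z = u ∨ z = v

/-- `W^H`: minimal left coset representatives, `{w : ℓ(wh) > ℓ(w) for all h ∈ H}`. -/
def minRep (cs : CoxeterSystem M W) (H : Set B) : Set W :=
  {w | ∀ h ∈ H, cs.length w < cs.length (w * cs.simple h)}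

/-- `^J W`: minimal right coset representatives, `{w : ℓ(rw) > ℓ(w) for all r ∈ J}`. -/
def minRepLeft (cs : CoxeterSystem M W) (J : Set B) : Set W :=
  {w | ∀ h ∈ J, cs.length w < cs.length (cs.simple h * w)}

/-- The standard parabolic (dihedral) subgroup `W_{{s,t}}`. -/
def stSubgroup (cs : CoxeterSystem M W) (s t : B) : Subgroup W :=
  Subgroup.closure {cs.simple s, cs.simple t}

/-- The defining recurrence of the parabolic Kazhdan–Lusztig `R`-polynomials
`R^{H,x}_{u,v}` of Deodhar, for `x ∈ {-1, q}`. -/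
def IsRFamily (cs : CoxeterSystem M W) (H : Set B) (x : Polynomial ℤ)
    (R : W → W → Polynomial ℤ) : Prop :=
  (∀ u v, u ∈ minRep cs H → v ∈ minRep cs H → ¬ bruhatLE cs u v → R u v = 0) ∧
  (∀ u, u ∈ minRep cs H → R u u = 1) ∧
  (∀ u v, u ∈ minRep cs H → v ∈ minRep cs H → bruhatLT cs u v →
    ∀ i : B, cs.length (cs.simple i * v) < cs.length v →
      ((cs.length (cs.simple i * u) < cs.length u →
          R u v = R (cs.simple i * u) (cs.simple i * v)) ∧
       (cs.length u < cs.length (cs.simple i * u) → cs.simple i * u ∈ minRep cs H →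
          R u v = (X - 1) * R u (cs.simple i * v)
            + X * R (cs.simple i * u) (cs.simple i * v)) ∧
       (cs.length u < cs.length (cs.simple i * u) → cs.simple i * u ∉ minRep cs H →
          R u v = (X - 1 - x) * R u (cs.simple i * v))))

/-- The defining recurrence of the ordinary Kazhdan–Lusztig `R`-polynomials. -/
def IsOrdRFamily (cs : CoxeterSystem M W) (R : W → W → Polynomial ℤ) : Prop :=
  (∀ u v, ¬ bruhatLE cs u v → R u v = 0) ∧
  (∀ u, R u u = 1) ∧
  (∀ u v, bruhatLT cs u v →
    ∀ i : B, cs.length (cs.simple i * v) < cs.length v →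
      ((cs.length (cs.simple i * u) < cs.length u →
          R u v = R (cs.simple i * u) (cs.simple i * v)) ∧
       (cs.length u < cs.length (cs.simple i * u) →
          R u v = (X - 1) * R u (cs.simple i * v)
            + X * R (cs.simple i * u) (cs.simple i * v))))

/-- The defining properties of the parabolic Kazhdan–Lusztig polynomials
`P^{H,x}_{u,v}`, relative to a given family `R` of parabolic `R`-polynomials. -/
def IsPFamily (cs : CoxeterSystem M W) (H : Set B) (R P : W → W → Polynomial ℤ) : Prop :=
  (∀ u v, u ∈ minRep cs H → v ∈ minRep cs H → ¬ bruhatLE cs u v → P u v = 0) ∧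
  (∀ u, u ∈ minRep cs H → P u u = 1) ∧
  (∀ u v, u ∈ minRep cs H → v ∈ minRep cs H → bruhatLT cs u v →
    2 * (P u v).degree + 1 ≤ ((cs.length v - cs.length u : ℕ) : WithBot ℕ)) ∧
  (∀ u v, u ∈ minRep cs H → v ∈ minRep cs H →
    (P u v).reflect (cs.length v - cs.length u) =
      ∑ᶠ z ∈ {z | bruhatLE cs u z ∧ bruhatLE cs z v ∧ z ∈ minRep cs H},
        R u z * P z v)

/-- A special matching of `w`: an involution of the lower Bruhat interval `[e,w]`
which matches each element to an element covering it or covered by it, and such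
that `u₁ ⊲ u₂` and `M u₁ ≠ u₂` imply `M u₁ ≤ M u₂`. -/
def IsSpecialMatching (cs : CoxeterSystem M W) (w : W) (Mm : W → W) : Prop :=
  (∀ u, bruhatLE cs u w → bruhatLE cs (Mm u) w) ∧
  (∀ u, bruhatLE cs u w → Mm (Mm u) = u) ∧
  (∀ u, bruhatLE cs u w → bruhatCovBy cs u (Mm u) ∨ bruhatCovBy cs (Mm u) u) ∧
  (∀ u₁ u₂, bruhatLE cs u₁ w → bruhatLE cs u₂ w → bruhatCovBy cs u₁ u₂ →
    Mm u₁ ≠ u₂ → bruhatLE cs (Mm u₁) (Mm u₂))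

/-- An `H`-special matching of `w`: a special matching `M` of `[e,w]` such that
`u ∈ [e,w]^H` and `M u ⊲ u` imply `M u ∈ W^H`. -/
def IsHSpecialMatching (cs : CoxeterSystem M W) (H : Set B) (w : W) (Mm : W → W) : Prop :=
  IsSpecialMatching cs w Mm ∧
  (∀ u, bruhatLE cs u w → u ∈ minRep cs H → bruhatCovBy cs (Mm u) u →
    Mm u ∈ minRep cs H)

/-- The polynomials `R_i` of Lemma 2 (`ricorsioni`):
`R_i = (q-1) ∑_{k=0}^{i-1} (-1)^k q^k` for `i` odd and
`R_i = (q-1)² ∑_{k=0}^{(i-2)/2} q^{2k}` for `i` even. -/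
noncomputable def seqR (i : ℕ) : Polynomial ℤ :=
  if Odd i then (X - 1) * ∑ k ∈ Finset.range i, (-1) ^ k * X ^ k
  else (X - 1) ^ 2 * ∑ k ∈ Finset.range (i / 2), X ^ (2 * k)

end CIKL

open Classical in
noncomputable def signIf (p : Prop) : ℤˣ := if p then -1 else 1

theorem signIf_of {p : Prop} (h : p) : signIf p = -1 := if_pos h

theorem signIf_of_not {p : Prop} (h : ¬p) : signIf p = 1 := if_neg h

theorem mul_mul_inv_eq_iff {G : Type*} [Group G] (a w v : G) :
    a * w * a⁻¹ = v ↔ w = a⁻¹ * v * a := by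
  constructor <;> rintro rfl <;> group

namespace CoxeterSystem

variable {B W : Type*} [Group W] {M : CoxeterMatrix B} (cs : CoxeterSystem M W)

local prefix:100 "σ" => cs.simple
local prefix:100 "ℓ" => cs.length
local prefix:100 "π" => cs.wordProd

noncomputable def signedConj (i : B) : Equiv.Perm (W × ℤˣ) :=
  Function.Involutive.toPerm (fun p => (σ i * p.1 * σ i, signIf (p.1 = σ i) * p.2)) <| by
    rintro ⟨w, ε⟩
    have hw : σ i * w * σ i = σ i ↔ w = σ i := by
      simpa [cs.inv_simple] using mul_mul_inv_eq_iff (σ i) w (σ i)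
    ext
    · simp [mul_assoc]
    · by_cases h : w = σ i <;> simp [h, hw, signIf_of, signIf_of_not]

theorem signedConj_apply (i : B) (w : W) (ε : ℤˣ) :
    cs.signedConj i (w, ε) = (σ i * w * σ i, signIf (w = σ i) * ε) := rfl

theorem simple_mul_simple_mul_pow (i j : B) (n : ℕ) :
    σ j * (σ i * σ j) ^ n = (σ j * σ i) ^ n * σ j :=
  SemiconjBy.pow_right (by simp [SemiconjBy, mul_assoc]) n

theorem signedConj_mul_signedConj_apply (i j : B) (w : W) (ε : ℤˣ) :
    (cs.signedConj i * cs.signedConj j) (w, ε) =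
      (σ i * σ j * w * (σ j * σ i), signIf (w = σ j) * signIf (w = σ j * σ i * σ j) * ε) := by
  have h : σ j * w * σ j = σ i ↔ w = σ j * σ i * σ j := by
    simpa [cs.inv_simple] using mul_mul_inv_eq_iff (σ j) w (σ i)
  rw [Equiv.Perm.mul_apply, signedConj_apply, signedConj_apply, h]
  ext
  · simp only [mul_assoc]
  · simp only [Units.val_mul]
    ring

theorem signedConj_mul_signedConj_pow_apply (i j : B) (n : ℕ) (w : W) (ε : ℤˣ) :
    ((cs.signedConj i * cs.signedConj j) ^ n) (w, ε) =
      ((σ i * σ j) ^ n * w * (σ j * σ i) ^ n,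
        (∏ k ∈ Finset.range (2 * n), signIf (w = (σ j * σ i) ^ k * σ j)) * ε) := by
  induction n with
  | zero => simp
  | succ n ih =>
    have hinv : ((σ i * σ j) ^ n)⁻¹ = (σ j * σ i) ^ n := by
      rw [← inv_pow, mul_inv_rev, cs.inv_simple, cs.inv_simple]
    have hconj : ∀ k : ℕ, (σ i * σ j) ^ n * w * (σ j * σ i) ^ n = (σ j * σ i) ^ k * σ j ↔
        w = (σ j * σ i) ^ (2 * n + k) * σ j := by
      intro k
      rw [← hinv, mul_mul_inv_eq_iff, hinv, mul_assoc, mul_assoc, simple_mul_simple_mul_pow,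
        ← mul_assoc, ← mul_assoc, ← pow_add, ← pow_add, show n + k + n = 2 * n + k by ring]
    have h0 := hconj 0
    have h1 := hconj 1
    rw [pow_zero, one_mul, add_zero] at h0
    rw [pow_one] at h1
    rw [pow_succ', Equiv.Perm.mul_apply, ih, signedConj_mul_signedConj_apply, h0, h1,
      mul_add_one, Finset.prod_range_succ, Finset.prod_range_succ]
    refine Prod.ext ?_ (by simp only; ac_rfl)
    simp only [pow_succ' (σ i * σ j), pow_succ (σ j * σ i), mul_assoc]

theorem isLiftable_signedConj : M.IsLiftable cs.signedConj := by
  intro i j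
  ext ⟨w, ε⟩ : 1
  rw [signedConj_mul_signedConj_pow_apply, cs.simple_mul_simple_pow, cs.simple_mul_simple_pow',
    two_mul, Finset.prod_range_add]
  -- the factors for `k` and `M i j + k` agree, so the product is a square
  simp only [pow_add, cs.simple_mul_simple_pow', one_mul, mul_one, Int.units_mul_self]
  rfl

noncomputable def signedConjHom : W →* Equiv.Perm (W × ℤˣ) :=
  cs.lift ⟨cs.signedConj, cs.isLiftable_signedConj⟩

theorem signedConjHom_wordProd (ω : List B) :
    cs.signedConjHom (π ω) = (ω.map cs.signedConj).prod := by
  rw [wordProd, map_list_prod, List.map_map]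
  congr 2
  funext i
  exact cs.lift_apply_simple _ i

theorem prod_map_signedConj_apply (ω : List B) (w : W) (ε : ℤˣ) :
    (ω.map cs.signedConj).prod (w, ε) =
      (π ω * w * (π ω)⁻¹, ((cs.rightInvSeq ω).map fun t => signIf (w = t)).prod * ε) := by
  induction ω with
  | nil => simp
  | cons i ω ih =>
    rw [List.map_cons, List.prod_cons, Equiv.Perm.mul_apply, ih, signedConj_apply,
      mul_mul_inv_eq_iff, rightInvSeq, List.map_cons, List.prod_cons, cs.wordProd_cons]
    ext
    · simp only [mul_inv_rev, cs.inv_simple, mul_assoc]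
    · simp only [mul_assoc]

/-- `-1` exactly when `t` is a right inversion of `w` (`inversionSign_eq_one_of_length_lt`,
`inversionSign_eq_neg_one`). -/
noncomputable def inversionSign (w t : W) : ℤˣ := (cs.signedConjHom w (t, 1)).2

theorem inversionSign_wordProd (ω : List B) (t : W) :
    cs.inversionSign (π ω) t = ((cs.rightInvSeq ω).map fun u => signIf (t = u)).prod := by
  simp [inversionSign, signedConjHom_wordProd, prod_map_signedConj_apply]

theorem signedConjHom_apply (w t : W) (ε : ℤˣ) :
    cs.signedConjHom w (t, ε) = (w * t * w⁻¹, cs.inversionSign w t * ε) := by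
  obtain ⟨ω, rfl⟩ := cs.wordProd_surjective w
  rw [inversionSign_wordProd, signedConjHom_wordProd, prod_map_signedConj_apply]

theorem inversionSign_one (t : W) : cs.inversionSign 1 t = 1 := by
  simp [inversionSign]

theorem inversionSign_simple (i : B) (t : W) : cs.inversionSign (σ i) t = signIf (t = σ i) := by
  simpa using cs.inversionSign_wordProd [i] t

theorem inversionSign_mul (u v t : W) :
    cs.inversionSign (u * v) t = cs.inversionSign u (v * t * v⁻¹) * cs.inversionSign v t := by
  change (cs.signedConjHom (u * v) (t, 1)).2 = _
  rw [map_mul, Equiv.Perm.mul_apply, signedConjHom_apply, signedConjHom_apply, mul_one]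

theorem inversionSign_self {t : W} (ht : cs.IsReflection t) : cs.inversionSign t t = -1 := by
  obtain ⟨u, i, rfl⟩ := ht
  have e : u⁻¹ * (u * σ i * u⁻¹) * u⁻¹⁻¹ = σ i := by group
  have h1 := cs.inversionSign_mul u u⁻¹ (u * σ i * u⁻¹)
  rw [mul_inv_cancel, inversionSign_one, e] at h1
  rw [cs.inversionSign_mul (u * σ i), e, inversionSign_mul, inversionSign_simple, signIf_of rfl,
    mul_inv_cancel_right, mul_neg_one, neg_mul, ← h1]

theorem inversionSign_eq_one_of_length_lt {w t : W} (ht : cs.IsReflection t)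
    (h : ℓ w < ℓ (w * t)) : cs.inversionSign w t = 1 := by
  obtain ⟨n, hn⟩ : ∃ n, ℓ w = n := ⟨_, rfl⟩
  induction n generalizing w t with
  | zero => rw [cs.length_eq_zero_iff.mp hn, inversionSign_one]
  | succ n ih =>
    obtain ⟨i, hi⟩ := cs.exists_rightDescent_of_ne_one (w := w) (by rintro rfl; simp at hn)
    rw [cs.isRightDescent_iff] at hi
    have hti : t ≠ σ i := by rintro rfl; omega
    have hw : w = w * σ i * σ i := by rw [cs.simple_mul_simple_cancel_right]
    have e : w * σ i * (σ i * t * (σ i)⁻¹) = w * t * σ i := by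
      simp [mul_assoc, cs.inv_simple, cs.simple_mul_simple_cancel_left]
    rw [hw, inversionSign_mul, inversionSign_simple, signIf_of_not hti, mul_one]
    refine ih (ht.conj _) ?_ (by omega)
    rw [e]
    rcases cs.length_mul_simple (w * t) i with h' | h' <;> omega

theorem inversionSign_eq_neg_one {w t : W} (h : cs.IsRightInversion w t) :
    cs.inversionSign w t = -1 := by
  obtain ⟨ht, hlt⟩ := h
  have hw : w = w * t * t := by rw [mul_assoc, ht.mul_self, mul_one]
  have hwt : cs.inversionSign (w * t) t = 1 :=
    cs.inversionSign_eq_one_of_length_lt ht (by rwa [← hw])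
  rw [hw, inversionSign_mul, mul_inv_cancel_right, hwt, inversionSign_self cs ht, one_mul]

/-- The strong exchange property. -/
theorem mem_rightInvSeq_of_isRightInversion {ω : List B} {t : W}
    (h : cs.IsRightInversion (π ω) t) : t ∈ cs.rightInvSeq ω := by
  by_contra hnot
  have hsign := cs.inversionSign_eq_neg_one h
  rw [inversionSign_wordProd, List.prod_eq_one] at hsign
  · exact absurd hsign (by decide)
  · simp only [List.mem_map]
    rintro _ ⟨u, hu, rfl⟩
    exact signIf_of_not (by rintro rfl; exact hnot hu)

theorem mem_leftInvSeq_of_isLeftInversion {ω : List B} {t : W}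
    (h : cs.IsLeftInversion (π ω) t) : t ∈ cs.leftInvSeq ω := by
  rw [← cs.isRightInversion_inv_iff, ← wordProd_reverse] at h
  simpa [rightInvSeq_reverse] using cs.mem_rightInvSeq_of_isRightInversion h

theorem exists_sublist_isReduced (ω : List B) :
    ∃ ω', ω'.Sublist ω ∧ cs.IsReduced ω' ∧ π ω' = π ω := by
  induction ω with
  | nil => exact ⟨[], List.Sublist.slnil, by simp [IsReduced], rfl⟩
  | cons i ω ih =>
    obtain ⟨ω', hsub, hred, heq⟩ := ih
    rw [cs.wordProd_cons, ← heq]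
    by_cases hi : cs.IsLeftDescent (π ω') i
    · have hmem := cs.mem_leftInvSeq_of_isLeftInversion
        ((cs.isLeftInversion_simple_iff_isLeftDescent _ _).mpr hi)
      obtain ⟨j, hj, hji⟩ := List.getElem_of_mem hmem
      have hdel : σ i * π ω' = π (ω'.eraseIdx j) := by
        rw [← getD_leftInvSeq_mul_wordProd, List.getD_eq_getElem _ _ hj, hji]
      rw [length_leftInvSeq] at hj
      rw [cs.isLeftDescent_iff, hred.eq, hdel] at hi
      refine ⟨ω'.eraseIdx j, (List.eraseIdx_sublist ω' j).trans (hsub.cons i), ?_, hdel.symm⟩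
      have hlen := List.length_eraseIdx_add_one hj
      show ℓ (π (ω'.eraseIdx j)) = _
      omega
    · rw [cs.not_isLeftDescent_iff, hred.eq] at hi
      exact ⟨i :: ω', hsub.cons_cons i, by simpa [IsReduced, cs.wordProd_cons] using hi,
        cs.wordProd_cons i ω'⟩

def parabolicSubgroup (J : Set B) : Subgroup W := Subgroup.closure (cs.simple '' J)

variable {cs} {J : Set B}

theorem simple_mem_parabolicSubgroup {i : B} (hi : i ∈ J) : σ i ∈ cs.parabolicSubgroup J :=
  Subgroup.subset_closure (Set.mem_image_of_mem _ hi)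

theorem wordProd_mem_parabolicSubgroup {ω : List B} (hω : ∀ i ∈ ω, i ∈ J) :
    π ω ∈ cs.parabolicSubgroup J := by
  induction ω with
  | nil => exact one_mem _
  | cons i ω ih =>
    rw [cs.wordProd_cons]
    exact mul_mem (simple_mem_parabolicSubgroup (hω i (by simp)))
      (ih fun j hj => hω j (by simp [hj]))

theorem exists_word_of_mem_parabolicSubgroup {g : W} (hg : g ∈ cs.parabolicSubgroup J) :
    ∃ ω : List B, (∀ i ∈ ω, i ∈ J) ∧ π ω = g := by
  induction hg using Subgroup.closure_induction with
  | mem _ hx =>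
    obtain ⟨i, hi, rfl⟩ := hx
    exact ⟨[i], by simpa using hi, cs.wordProd_singleton i⟩
  | one => exact ⟨[], by simp, rfl⟩
  | mul _ _ _ _ hx hy =>
    obtain ⟨ω₁, h₁, rfl⟩ := hx
    obtain ⟨ω₂, h₂, rfl⟩ := hy
    exact ⟨ω₁ ++ ω₂, fun i hi => (List.mem_append.mp hi).elim (h₁ i) (h₂ i),
      cs.wordProd_append ω₁ ω₂⟩
  | inv _ _ hx =>
    obtain ⟨ω, h, rfl⟩ := hx
    exact ⟨ω.reverse, by simpa using h, cs.wordProd_reverse ω⟩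

theorem exists_isReduced_word_of_mem_parabolicSubgroup {g : W}
    (hg : g ∈ cs.parabolicSubgroup J) :
    ∃ ω : List B, (∀ i ∈ ω, i ∈ J) ∧ cs.IsReduced ω ∧ π ω = g := by
  obtain ⟨ω, hω, rfl⟩ := exists_word_of_mem_parabolicSubgroup hg
  obtain ⟨ω', hsub, hred, heq⟩ := cs.exists_sublist_isReduced ω
  exact ⟨ω', fun i hi => hω i (hsub.subset hi), hred, heq⟩

theorem exists_leftDescent_of_mem_parabolicSubgroup {g : W}
    (hg : g ∈ cs.parabolicSubgroup J) (hne : g ≠ 1) : ∃ i ∈ J, cs.IsLeftDescent g i := by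
  obtain ⟨ω, hω, hred, rfl⟩ := exists_isReduced_word_of_mem_parabolicSubgroup hg
  obtain _ | ⟨i, ω'⟩ := ω
  · exact absurd cs.wordProd_nil hne
  refine ⟨i, hω i (by simp), ?_⟩
  rw [IsLeftDescent, hred.eq, cs.wordProd_cons, cs.simple_mul_simple_cancel_left]
  exact (cs.length_wordProd_le ω').trans_lt (by simp)

theorem exists_rightDescent_of_mem_parabolicSubgroup {g : W}
    (hg : g ∈ cs.parabolicSubgroup J) (hne : g ≠ 1) : ∃ i ∈ J, cs.IsRightDescent g i := by
  simp only [← cs.isLeftDescent_inv_iff]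
  exact exists_leftDescent_of_mem_parabolicSubgroup (inv_mem hg) (inv_ne_one.mpr hne)

theorem exists_eq_simple_of_mem_parabolicSubgroup {g : W} (hg : g ∈ cs.parabolicSubgroup J)
    (hlen : ℓ g = 1) : ∃ i ∈ J, g = σ i := by
  obtain ⟨i, hi, hdesc⟩ := exists_leftDescent_of_mem_parabolicSubgroup hg
    (by rintro rfl; simp at hlen)
  refine ⟨i, hi, ?_⟩
  rw [IsLeftDescent, hlen, Nat.lt_one_iff, cs.length_eq_zero_iff] at hdesc
  rw [eq_inv_of_mul_eq_one_right hdesc, cs.inv_simple]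

variable (cs) in
theorem rightInvSeq_append (ω₁ ω₂ : List B) :
    cs.rightInvSeq (ω₁ ++ ω₂) =
      (cs.rightInvSeq ω₁).map (fun t => (π ω₂)⁻¹ * t * π ω₂) ++ cs.rightInvSeq ω₂ := by
  induction ω₁ with
  | nil => simp
  | cons i ω₁ ih =>
    simp only [List.cons_append, rightInvSeq, ih, List.map_cons, cs.wordProd_append]
    simp only [mul_inv_rev, mul_assoc]

theorem mem_parabolicSubgroup_of_mem_rightInvSeq {ω : List B} (hω : ∀ i ∈ ω, i ∈ J) {t : W}
    (ht : t ∈ cs.rightInvSeq ω) : t ∈ cs.parabolicSubgroup J := by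
  induction ω with
  | nil => simp at ht
  | cons i ω ih =>
    rcases List.mem_cons.mp ht with rfl | ht
    · have hπ : π ω ∈ cs.parabolicSubgroup J :=
        wordProd_mem_parabolicSubgroup fun j hj => hω j (List.mem_cons_of_mem i hj)
      exact mul_mem (mul_mem (inv_mem hπ) (simple_mem_parabolicSubgroup (hω i (by simp)))) hπ
    · exact ih (fun j hj => hω j (List.mem_cons_of_mem i hj)) ht

theorem exists_mem_parabolicSubgroup_mul_eq_of_isRightInversion {g x t : W}
    (hg : g ∈ cs.parabolicSubgroup J) (ht : cs.IsReflection t) (hx : ℓ x < ℓ (x * t))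
    (hgx : ℓ (g * x * t) < ℓ (g * x)) : ∃ r ∈ cs.parabolicSubgroup J, x * t = r * x := by
  obtain ⟨ω, hω, rfl⟩ := exists_word_of_mem_parabolicSubgroup hg
  obtain ⟨ω', hred, rfl⟩ := cs.exists_isReduced x
  have hmem := cs.mem_rightInvSeq_of_isRightInversion (ω := ω ++ ω')
    ⟨ht, by rwa [cs.wordProd_append]⟩
  rw [rightInvSeq_append, List.mem_append, List.mem_map] at hmem
  rcases hmem with ⟨r, hr, rfl⟩ | hmem
  · exact ⟨r, mem_parabolicSubgroup_of_mem_rightInvSeq hω hr, by group⟩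
  · exact absurd hx (cs.isRightInversion_of_mem_rightInvSeq hred hmem).2.asymm

end CoxeterSystem

namespace CIKL

open CoxeterSystem

variable {B W : Type*} [Group W] {M : CoxeterMatrix B} {cs : CoxeterSystem M W} {H J : Set B}

local prefix:100 "σ" => cs.simple
local prefix:100 "ℓ" => cs.length
local prefix:100 "π" => cs.wordProd

theorem simple_mul_mem_minRep {w : W} {i : B} (hw : w ∈ minRep cs H)
    (hi : ℓ (σ i * w) < ℓ w) : σ i * w ∈ minRep cs H := by
  intro h hh
  have := hw h hh
  rw [mul_assoc]
  rcases cs.length_simple_mul (w * σ h) i with h' | h' <;> omega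

theorem mul_simple_mem_minRepLeft {x : W} {i : B} (hx : x ∈ minRepLeft cs J)
    (hi : ℓ (x * σ i) < ℓ x) : x * σ i ∈ minRepLeft cs J := by
  intro j hj
  have := hx j hj
  rw [← mul_assoc]
  rcases cs.length_mul_simple (σ j * x) i with h' | h' <;> omega

theorem length_mul_of_mem_minRepLeft {g x : W} (hg : g ∈ cs.parabolicSubgroup J)
    (hx : x ∈ minRepLeft cs J) : ℓ (g * x) = ℓ g + ℓ x := by
  obtain ⟨n, hn⟩ : ∃ n, ℓ x = n := ⟨_, rfl⟩
  induction n generalizing g x with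
  | zero => simp [cs.length_eq_zero_iff.mp hn]
  | succ n ih =>
    obtain ⟨i, hi⟩ := cs.exists_rightDescent_of_ne_one (w := x) (by rintro rfl; simp at hn)
    have hx₁ := mul_simple_mem_minRepLeft hx hi
    rw [cs.isRightDescent_iff] at hi
    have hlen : ℓ (x * σ i) = n := by omega
    have ih₁ : ∀ g' ∈ cs.parabolicSubgroup J, ℓ (g' * (x * σ i)) = ℓ g' + ℓ (x * σ i) :=
      fun g' hg' => ih hg' hx₁ hlen
    have hxx : x * σ i * σ i = x := cs.simple_mul_simple_cancel_right i
    rcases cs.length_mul_simple (g * (x * σ i)) i with h | h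
    · rw [mul_assoc, hxx, ih₁ g hg] at h
      omega
    · -- then `x = r * (x * σ i)` with `r ∈ W_J` of length one, against `x ∈ ^J W`
      exfalso
      obtain ⟨r, hr, hxr⟩ := exists_mem_parabolicSubgroup_mul_eq_of_isRightInversion (x := x * σ i)
        hg (cs.isReflection_simple i) (by rw [hxx]; omega) (by omega)
      rw [hxx] at hxr
      obtain ⟨j, hj, rfl⟩ := exists_eq_simple_of_mem_parabolicSubgroup hr
        (by have := ih₁ r hr; rw [← hxr] at this; omega)
      have hjx : σ j * x = x * σ i := by
        rw [← cs.simple_mul_simple_cancel_left j (w := x * σ i), ← hxr]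
      have := hx j hj
      rw [hjx] at this
      omega

theorem mem_minRep_of_mul_mem_minRep {g h x : W} (hx : x ∈ minRepLeft cs J)
    (hg : g ∈ cs.parabolicSubgroup J) (hh : h ∈ cs.parabolicSubgroup J)
    (hlen : ℓ (g * h) = ℓ g + ℓ h) (hmem : g * h * x ∈ minRep cs H) : h * x ∈ minRep cs H := by
  obtain ⟨n, hn⟩ : ∃ n, ℓ g = n := ⟨_, rfl⟩
  induction n generalizing g with
  | zero => rwa [cs.length_eq_zero_iff.mp hn, one_mul] at hmem
  | succ n ih =>
    obtain ⟨i, hi, hdesc⟩ := exists_leftDescent_of_mem_parabolicSubgroup hg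
      (by rintro rfl; simp at hn)
    rw [cs.isLeftDescent_iff] at hdesc
    have hig : σ i * g ∈ cs.parabolicSubgroup J := mul_mem (simple_mem_parabolicSubgroup hi) hg
    have hle := cs.length_mul_le (σ i * g) h
    have hge := cs.length_mul_le (σ i) (σ i * g * h)
    rw [show σ i * (σ i * g * h) = g * h by simp only [mul_assoc, cs.simple_mul_simple_cancel_left],
      cs.length_simple] at hge
    have hlen' : ℓ (σ i * g * h) = ℓ (σ i * g) + ℓ h := by omega
    have hlt : ℓ (σ i * (g * h * x)) < ℓ (g * h * x) := by
      rw [← mul_assoc, ← mul_assoc, length_mul_of_mem_minRepLeft (mul_mem hig hh) hx,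
        length_mul_of_mem_minRepLeft (mul_mem hg hh) hx]
      omega
    refine ih hig hlen' ?_ (by omega)
    simpa only [mul_assoc] using simple_mul_mem_minRep hmem hlt

theorem simple_mul_mem_minRep_of_isRightDescent {g x : W} {i : B} (hx : x ∈ minRepLeft cs J)
    (hg : g ∈ cs.parabolicSubgroup J) (hi : i ∈ J) (hdesc : cs.IsRightDescent g i)
    (hmem : g * x ∈ minRep cs H) : σ i * x ∈ minRep cs H := by
  have hσ := simple_mem_parabolicSubgroup (cs := cs) hi
  rw [cs.isRightDescent_iff] at hdesc
  refine mem_minRep_of_mul_mem_minRep hx (mul_mem hg hσ) hσ ?_ ?_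
  · rw [cs.simple_mul_simple_cancel_right, cs.length_simple]
    omega
  · rwa [cs.simple_mul_simple_cancel_right]

/-- Deodhar's lemma. -/
theorem exists_simple_mul_eq_mul_simple_of_not_mem_minRep {w : W} {i : B}
    (hw : w ∈ minRep cs H) (hup : ℓ w < ℓ (σ i * w)) (hnot : σ i * w ∉ minRep cs H) :
    ∃ h ∈ H, σ i * w = w * σ h := by
  simp only [minRep, Set.mem_ofPred_eq, not_forall, not_lt] at hnot
  obtain ⟨h, hh, hle⟩ := hnot
  have hwh := hw h hh
  obtain ⟨ω, hω, rfl⟩ := cs.exists_isReduced w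
  have hmem : σ i ∈ cs.leftInvSeq (ω.concat h) := by
    refine cs.mem_leftInvSeq_of_isLeftInversion ⟨cs.isReflection_simple i, ?_⟩
    rw [cs.wordProd_concat, ← mul_assoc]
    have := cs.length_mul_simple_ne (σ i * π ω) h
    rcases cs.length_simple_mul (π ω) i with h' | h' <;>
      rcases cs.length_mul_simple (σ i * π ω) h with h'' | h'' <;> omega
  rw [leftInvSeq_concat, List.concat_eq_append, List.mem_append, List.mem_singleton] at hmem
  rcases hmem with hmem | hmem
  · exact absurd hup (cs.isLeftInversion_of_mem_leftInvSeq hω hmem).2.asymm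
  · exact ⟨h, hh, by rw [hmem]; group⟩

theorem exists_simple_mul_eq_mul_simple_of_mem_parabolicSubgroup {g x : W} {i : B}
    (hx : x ∈ minRepLeft cs J) (hg : g ∈ cs.parabolicSubgroup J) (hi : i ∈ J)
    (hmem : g * x ∈ minRep cs H) (hup : ℓ g < ℓ (σ i * g)) (hnot : σ i * g * x ∉ minRep cs H) :
    ∃ r ∈ J, σ i * g = g * σ r ∧ σ r * x ∉ minRep cs H := by
  have hig : σ i * g ∈ cs.parabolicSubgroup J := mul_mem (simple_mem_parabolicSubgroup hi) hg
  obtain ⟨h, hh, he⟩ := exists_simple_mul_eq_mul_simple_of_not_mem_minRep hmem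
    (by rw [← mul_assoc, length_mul_of_mem_minRepLeft hig hx,
      length_mul_of_mem_minRepLeft hg hx]; omega)
    (by rwa [← mul_assoc])
  have hu : g⁻¹ * σ i * g ∈ cs.parabolicSubgroup J := mul_mem (mul_mem (inv_mem hg)
    (simple_mem_parabolicSubgroup hi)) hg
  have hux : g⁻¹ * σ i * g * x = x * σ h := by
    simp only [mul_assoc] at he ⊢
    rw [he, inv_mul_cancel_left]
  have hlen := length_mul_of_mem_minRepLeft hu hx
  rw [hux] at hlen
  obtain ⟨r, hr, hru⟩ := exists_eq_simple_of_mem_parabolicSubgroup hu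
    (by rcases cs.length_mul_simple x h with h' | h' <;> omega)
  refine ⟨r, hr, by rw [← hru]; group, fun hcon => ?_⟩
  have := hcon h hh
  rw [← hru, hux, cs.simple_mul_simple_cancel_right] at this
  omega

theorem mul_mem_minRep_of_forall_length_lt {g x : W} (hx : x ∈ minRepLeft cs J)
    (hxH : x ∈ minRep cs H) (hg : g ∈ cs.parabolicSubgroup J)
    (hdesc : ∀ r ∈ J, σ r * x ∉ minRep cs H → ℓ g < ℓ (g * σ r)) : g * x ∈ minRep cs H := by
  obtain ⟨n, hn⟩ : ∃ n, ℓ g = n := ⟨_, rfl⟩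
  induction n generalizing g with
  | zero => rwa [cs.length_eq_zero_iff.mp hn, one_mul]
  | succ n ih =>
    obtain ⟨i, hi, hdi⟩ := exists_leftDescent_of_mem_parabolicSubgroup hg
      (by rintro rfl; simp at hn)
    rw [cs.isLeftDescent_iff] at hdi
    have hig : σ i * g ∈ cs.parabolicSubgroup J := mul_mem (simple_mem_parabolicSubgroup hi) hg
    have hdesc' : ∀ r ∈ J, σ r * x ∉ minRep cs H → ℓ (σ i * g) < ℓ (σ i * g * σ r) := by
      intro r hr hrx
      have := hdesc r hr hrx
      have hne := cs.length_mul_simple_ne (σ i * g) r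
      have hle := cs.length_mul_le (σ i) (σ i * g * σ r)
      rw [show σ i * (σ i * g * σ r) = g * σ r by
        simp only [mul_assoc, cs.simple_mul_simple_cancel_left], cs.length_simple] at hle
      omega
    have hmem := ih hig hdesc' (by omega)
    by_contra hnot
    obtain ⟨r, hr, hgr, hrx⟩ := exists_simple_mul_eq_mul_simple_of_mem_parabolicSubgroup hx hig hi
      hmem (by rw [cs.simple_mul_simple_cancel_left]; omega)
      (by rwa [cs.simple_mul_simple_cancel_left])
    rw [cs.simple_mul_simple_cancel_left] at hgr
    have hgσ : g * σ r = σ i * g := by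
      calc g * σ r = σ i * g * σ r * σ r := by rw [← hgr]
        _ = σ i * g := cs.simple_mul_simple_cancel_right r
    have := hdesc r hr hrx
    rw [hgσ] at this
    omega

theorem mul_mem_minRep_iff {g x : W} (hx : x ∈ minRepLeft cs J)
    (hg : g ∈ cs.parabolicSubgroup J) :
    g * x ∈ minRep cs H ↔
      x ∈ minRep cs H ∧ ∀ r ∈ J, σ r * x ∉ minRep cs H → ℓ g < ℓ (g * σ r) := by
  refine ⟨fun hmem => ⟨?_, fun r hr hrx => ?_⟩,
    fun h => mul_mem_minRep_of_forall_length_lt hx h.1 hg h.2⟩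
  · simpa using mem_minRep_of_mul_mem_minRep hx hg (one_mem _) (by simp) (by rwa [mul_one])
  · by_contra hle
    exact hrx (simple_mul_mem_minRep_of_isRightDescent hx hg hr
      ((not_lt.mp hle).lt_of_ne (cs.length_mul_simple_ne g r)) hmem)

theorem image_mul_inter_minRep {x : W} (hx : x ∈ minRepLeft cs J) :
    (fun g => g * x) '' (cs.parabolicSubgroup J : Set W) ∩ minRep cs H =
      {y | ∃ g ∈ cs.parabolicSubgroup J, (x ∈ minRep cs H ∧
        ∀ r ∈ J, σ r * x ∉ minRep cs H → ℓ g < ℓ (g * σ r)) ∧ y = g * x} := by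
  ext y
  constructor
  · rintro ⟨⟨g, hg, rfl⟩, hmem⟩
    exact ⟨g, hg, (mul_mem_minRep_iff hx hg).mp hmem, rfl⟩
  · rintro ⟨g, hg, hcond, rfl⟩
    exact ⟨⟨g, hg, rfl⟩, (mul_mem_minRep_iff hx hg).mpr hcond⟩

/-- Proposition `partizione`: for `x ∈ ^{{s,t}}W`, the
intersection `(W_{{s,t}}·x) ∩ W^H` is one of: the empty set, the singleton `{x}`,
the elements `g·x` with `t` not a right descent of `g`, the elements `g·x` with `s`
not a right descent of `g`, or the whole coset. -/
theorem coset_inter_minRep_classification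
    {B : Type*} {W : Type*} [Group W] {M : CoxeterMatrix B} (cs : CoxeterSystem M W)
    (H : Set B) (s t : B) (x : W) (hx : x ∈ minRepLeft cs {s, t}) :
    ((fun g => g * x) '' (stSubgroup cs s t : Set W)) ∩ minRep cs H = ∅ ∨
    ((fun g => g * x) '' (stSubgroup cs s t : Set W)) ∩ minRep cs H = {x} ∨
    ((fun g => g * x) '' (stSubgroup cs s t : Set W)) ∩ minRep cs H =
      {y | ∃ g ∈ stSubgroup cs s t,
        cs.length g < cs.length (g * cs.simple t) ∧ y = g * x} ∨
    ((fun g => g * x) '' (stSubgroup cs s t : Set W)) ∩ minRep cs H =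
      {y | ∃ g ∈ stSubgroup cs s t,
        cs.length g < cs.length (g * cs.simple s) ∧ y = g * x} ∨
    ((fun g => g * x) '' (stSubgroup cs s t : Set W)) ∩ minRep cs H =
      (fun g => g * x) '' (stSubgroup cs s t : Set W) := by
  have hst : stSubgroup cs s t = cs.parabolicSubgroup {s, t} := by
    rw [stSubgroup, parabolicSubgroup, Set.image_pair]
  rw [hst, image_mul_inter_minRep hx]
  simp only [Set.mem_insert_iff, Set.mem_singleton_iff, forall_eq_or_imp, forall_eq]
  by_cases hx0 : x ∈ minRep cs H
  swap
  · exact Or.inl (by simp [hx0])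
  by_cases hs : cs.simple s * x ∈ minRep cs H <;> by_cases ht : cs.simple t * x ∈ minRep cs H
  · refine Or.inr (Or.inr (Or.inr (Or.inr ?_)))
    ext y
    simp only [hx0, hs, ht, not_true_eq_false, false_imp_iff, and_self, true_and,
      Set.mem_ofPred_eq, Set.mem_image, SetLike.mem_coe, eq_comm (a := y)]
  · refine Or.inr (Or.inr (Or.inl ?_))
    simp [hx0, hs, ht]
  · refine Or.inr (Or.inr (Or.inr (Or.inl ?_)))
    simp [hx0, hs, ht]
  · refine Or.inr (Or.inl (Set.eq_singleton_iff_unique_mem.mpr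
      ⟨⟨1, one_mem _, by simp [hx0], (one_mul x).symm⟩, ?_⟩))
    rintro _ ⟨g, hg, ⟨-, hgs, hgt⟩, rfl⟩
    obtain rfl : g = 1 := by
      by_contra hne
      obtain ⟨r, hr, hd⟩ := exists_rightDescent_of_mem_parabolicSubgroup hg hne
      rcases hr with rfl | rfl
      exacts [hd.asymm (hgs hs), hd.asymm (hgt ht)]
    exact one_mul x

end CIKL
end

section
/- Let (W,S) be a Coxeter system, H ⊆ S, s,t ∈ S, and x ∈ ^{{s,t}}W. Suppose g ∈ W_{{s,t}} with g ≠ e, and p ∈ {s,t} is not a left descent of g, and suppose g·x ∈ W^H while p·g·x ∉ W^H. Then p·g is the longest element of W_{{s,t}}; in particular, W_{{s,t}} is finite. -/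
open Polynomial

namespace CIKL

variable {B : Type*} {W : Type*} [Group W] {M : CoxeterMatrix B}

/-!
Because `x` is the shortest element of `W_{s,t} x`, lengths add along this coset:
`ℓ(wx) = ℓ(w) + ℓ(x)` for `w ∈ W_{s,t}`. Choose `h ∈ H` with `ℓ(pgxh) < ℓ(pgx)`. Since
`ℓ(gxh) > ℓ(gx)`, the exchange condition forces `p·gx = gx·h`. So `r = g⁻¹pg ∈ W_{s,t}`
satisfies `rx = xh`, hence `ℓ(r) ≤ 1`. Now `pg = gr`, so the left descent `o ≠ p` of `g` is
also a left descent of `pg`, and both `s` and `t` are left descents of `pg`. Reduced words in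
`{s, t}` alternate, so both alternating words of length `ℓ(pg)` represent `pg`, and no reduced
word in `{s, t}` is longer. This bounds lengths in `W_{s,t}`, which is therefore finite.

The exchange condition follows from the strong exchange condition, proved by counting mod 2
the occurrences of a reflection in a left inversion sequence. This count is well defined on `W`
because `sᵢ ↦ (δ_{sᵢ}, sᵢ)` satisfies the Coxeter relations in `(W → ZMod 2) ⋊ W`.
-/

section GroupIdentities

variable {G : Type*} [Group G]

theorem inv_mul_mul_eq_iff_eq_mul_mul_inv {w c t : G} :
    w⁻¹ * t * w = c ↔ t = w * c * w⁻¹ := by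
  constructor <;> rintro rfl <;> group

theorem pow_mul_mul_inv_pow_of_mul_self {a b : G} (ha : a * a = 1) (hb : b * b = 1) (j : ℕ) :
    (a * b) ^ j * a * ((a * b) ^ j)⁻¹ = (a * b) ^ (2 * j) * a := by
  have ha' : a⁻¹ = a := inv_eq_of_mul_eq_one_right ha
  have hb' : b⁻¹ = b := inv_eq_of_mul_eq_one_right hb
  have hconj : a * ((a * b) ^ j)⁻¹ * a⁻¹ = (a * b) ^ j := by
    rw [← inv_pow, ← conj_pow, mul_inv_rev, hb', ha', mul_assoc, mul_assoc, ha, mul_one]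
  calc (a * b) ^ j * a * ((a * b) ^ j)⁻¹
      = (a * b) ^ j * (a * ((a * b) ^ j)⁻¹ * a⁻¹) * a := by group
    _ = (a * b) ^ (2 * j) * a := by rw [hconj, ← pow_add, two_mul]

end GroupIdentities

theorem sum_range_two_mul {R : Type*} [AddCommMonoid R] (g : ℕ → R) (m : ℕ) :
    ∑ j ∈ Finset.range m, (g (2 * j) + g (2 * j + 1)) =
      ∑ k ∈ Finset.range (2 * m), g k := by
  induction m with
  | zero => simp
  | succ m ih =>
    rw [Finset.sum_range_succ, ih, Nat.mul_succ, Finset.sum_range_succ, Finset.sum_range_succ,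
      add_assoc]

/-- The semidirect product `(G → ZMod 2) ⋊ G`, where `G` acts on functions by conjugating their
argument. -/
@[ext]
structure ParityPair (G : Type*) where
  par : G → ZMod 2
  elt : G

namespace ParityPair

variable {G : Type*}

open scoped Classical in
noncomputable def single (a : G) : ParityPair G := ⟨fun t => if t = a then 1 else 0, a⟩

open scoped Classical in
theorem single_par (a t : G) : (single a).par t = if t = a then 1 else 0 := rfl

@[simp] theorem single_elt (a : G) : (single a).elt = a := rfl

variable [Group G]

instance : Monoid (ParityPair G) where
  mul x y := ⟨fun t => x.par t + y.par (x.elt⁻¹ * t * x.elt), x.elt * y.elt⟩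
  one := ⟨0, 1⟩
  mul_assoc x y z := by
    refine ParityPair.ext (funext fun t => ?_) (mul_assoc ..)
    change x.par t + y.par (x.elt⁻¹ * t * x.elt) +
        z.par ((x.elt * y.elt)⁻¹ * t * (x.elt * y.elt)) =
      x.par t + (y.par (x.elt⁻¹ * t * x.elt) +
        z.par (y.elt⁻¹ * (x.elt⁻¹ * t * x.elt) * y.elt))
    rw [add_assoc]
    group
  one_mul x := ParityPair.ext (funext fun t => by change 0 + x.par (1⁻¹ * t * 1) = _; simp)
    (one_mul _)
  mul_one x := ParityPair.ext (funext fun t => add_zero _) (mul_one _)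

@[simp] theorem mul_par (x y : ParityPair G) (t : G) :
    (x * y).par t = x.par t + y.par (x.elt⁻¹ * t * x.elt) := rfl

@[simp] theorem mul_elt (x y : ParityPair G) : (x * y).elt = x.elt * y.elt := rfl

@[simp] theorem one_par (t : G) : (1 : ParityPair G).par t = 0 := rfl

@[simp] theorem one_elt : (1 : ParityPair G).elt = 1 := rfl

@[simp] theorem pow_elt (x : ParityPair G) (k : ℕ) : (x ^ k).elt = x.elt ^ k := by
  induction k with
  | zero => simp
  | succ k ih => rw [pow_succ, pow_succ, mul_elt, ih]

theorem pow_par (x : ParityPair G) (k : ℕ) (t : G) :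
    (x ^ k).par t = ∑ j ∈ Finset.range k, x.par ((x.elt ^ j)⁻¹ * t * x.elt ^ j) := by
  induction k with
  | zero => simp
  | succ k ih => rw [pow_succ, mul_par, ih, Finset.sum_range_succ, pow_elt]

def eltHom : ParityPair G →* G where
  toFun := elt
  map_one' := rfl
  map_mul' _ _ := rfl

@[simp] theorem eltHom_apply (x : ParityPair G) : eltHom x = x.elt := rfl

open scoped Classical in
theorem single_mul_single_pow {a b : G} (ha : a * a = 1) (hb : b * b = 1) {m : ℕ}
    (hm : (a * b) ^ m = 1) : (single a * single b) ^ m = 1 := by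
  refine ParityPair.ext (funext fun t => ?_) (by simp [hm])
  set u := a * b with hu
  let g : ℕ → ZMod 2 := fun k => if t = u ^ k * a then 1 else 0
  have hconj (j : ℕ) :
      (single a * single b).par ((u ^ j)⁻¹ * t * u ^ j) = g (2 * j) + g (2 * j + 1) := by
    have h1 := pow_mul_mul_inv_pow_of_mul_self ha hb j
    have h2 : u ^ (2 * j + 1) * a = u ^ j * (a * b * a⁻¹) * (u ^ j)⁻¹ := by
      rw [inv_eq_of_mul_eq_one_right ha, pow_succ', mul_assoc, ← h1, ← hu]; group
    simp only [mul_par, single_par, single_elt, g]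
    congr 1 <;> refine if_congr ?_ rfl rfl
    · rw [inv_mul_mul_eq_iff_eq_mul_mul_inv, h1]
    · rw [inv_mul_mul_eq_iff_eq_mul_mul_inv, inv_mul_mul_eq_iff_eq_mul_mul_inv, h2]
  -- the terms of index `k` and `k + m` of the resulting sum coincide, since `u ^ m = 1`
  rw [pow_par, mul_elt, single_elt, single_elt, Finset.sum_congr rfl fun j _ => hconj j,
    sum_range_two_mul, two_mul, Finset.sum_range_add]
  simp only [g, pow_add, hm, one_mul]
  exact CharTwo.add_self_eq_zero _

end ParityPair

open CoxeterSystem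

section Coxeter

variable (cs : CoxeterSystem M W)

local prefix:100 "s " => cs.simple
local prefix:100 "π " => cs.wordProd
local prefix:100 "ℓ " => cs.length
local prefix:100 "lis " => cs.leftInvSeq

theorem isLiftable_single_simple : M.IsLiftable fun i => ParityPair.single (s i) :=
  fun i i' => ParityPair.single_mul_single_pow (cs.simple_mul_simple_self i)
    (cs.simple_mul_simple_self i') (cs.simple_mul_simple_pow i i')

/-- `(parityHom cs w).par t` is the parity of the number of occurrences of `t` in the left
inversion sequence of any word for `w`. -/
noncomputable def parityHom : W →* ParityPair W := cs.lift ⟨_, isLiftable_single_simple cs⟩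

@[simp] theorem parityHom_simple (i : B) : parityHom cs (s i) = ParityPair.single (s i) :=
  cs.lift_apply_simple _ i

@[simp] theorem parityHom_elt (w : W) : (parityHom cs w).elt = w :=
  DFunLike.congr_fun (cs.ext_simple (φ₁ := ParityPair.eltHom.comp (parityHom cs))
    (φ₂ := MonoidHom.id W) fun i => by simp) w

open scoped Classical in
theorem parityHom_par_wordProd (ω : List B) (t : W) :
    (parityHom cs (π ω)).par t = (lis ω).count t := by
  induction ω generalizing t with
  | nil => simp
  | cons i ω ih =>
    have hmap : ((lis ω).map (MulAut.conj (s i))).count t =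
        (lis ω).count ((s i)⁻¹ * t * s i) := by
      conv_lhs => rw [show t = MulAut.conj (s i) ((s i)⁻¹ * t * s i) by simp [mul_assoc]]
      exact List.count_map_of_injective _ _ (MulAut.conj (s i)).injective _
    rw [cs.wordProd_cons, map_mul, ParityPair.mul_par, ih, parityHom_simple,
      show lis (i :: ω) = s i :: (lis ω).map (MulAut.conj (s i)) from rfl, List.count_cons, hmap,
      ParityPair.single_par, ParityPair.single_elt, add_comm, Nat.cast_add]
    congr 1
    by_cases h : t = s i <;> simp [h, Ne.symm]

theorem parityHom_par_self {t : W} (ht : cs.IsReflection t) : (parityHom cs t).par t = 1 := by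
  obtain ⟨w, i, rfl⟩ := ht
  have hcancel := congrArg (fun u => (parityHom cs u).par (w * s i * w⁻¹)) (mul_inv_cancel w)
  simp only [map_mul, ParityPair.mul_par, parityHom_elt, map_one, ParityPair.one_par] at hcancel ⊢
  simp [ParityPair.single_par, mul_assoc] at hcancel ⊢
  linear_combination hcancel

open scoped Classical in
theorem mem_leftInvSeq_of_isLeftInversion {ω : List B} {t : W}
    (ht : cs.IsLeftInversion (π ω) t) : t ∈ lis ω := by
  by_contra hmem
  obtain ⟨ω', hω', hω'π⟩ := cs.exists_isReduced (t * π ω)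
  have hmem' : t ∉ lis ω' := fun h => by
    have := (cs.isLeftInversion_of_mem_leftInvSeq hω' h).2
    rw [← hω'π, ← mul_assoc, ht.1.mul_self, one_mul] at this
    exact absurd ht.2 this.not_gt
  -- both words miss `t`, yet multiplying by `t` changes the parity at `t`
  have key := congrArg (fun u => (parityHom cs u).par t)
    (show π ω = t * (t * π ω) by rw [← mul_assoc, ht.1.mul_self, one_mul])
  rw [map_mul, ParityPair.mul_par, parityHom_elt, inv_mul_cancel, one_mul,
    parityHom_par_self cs ht.1, hω'π, parityHom_par_wordProd, parityHom_par_wordProd,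
    List.count_eq_zero_of_not_mem hmem, List.count_eq_zero_of_not_mem hmem'] at key
  simp at key

theorem exists_eraseIdx_of_isLeftInversion {ω : List B} {t : W}
    (ht : cs.IsLeftInversion (π ω) t) : ∃ j < ω.length, t * π ω = π (ω.eraseIdx j) := by
  obtain ⟨j, hj, rfl⟩ := List.getElem_of_mem (mem_leftInvSeq_of_isLeftInversion cs ht)
  rw [cs.length_leftInvSeq] at hj
  refine ⟨j, hj, ?_⟩
  rw [← cs.getD_leftInvSeq_mul_wordProd, List.getD_eq_getElem]

theorem length_wordProd_eraseIdx_lt {ω : List B} {j : ℕ} (hj : j < ω.length) :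
    ℓ (π (ω.eraseIdx j)) < ω.length := by
  have := cs.length_wordProd_le (ω.eraseIdx j)
  rw [List.length_eraseIdx_of_lt hj] at this
  omega

theorem simple_mul_eq_mul_simple_of_length_lt {w : W} {i k : B} (hi : ℓ w < ℓ (s i * w))
    (hk : ℓ w < ℓ (w * s k)) (hik : ℓ (s i * w * s k) < ℓ (s i * w)) :
    s i * w = w * s k := by
  obtain ⟨ω, hω, rfl⟩ := cs.exists_isReduced w
  have hi' := (cs.length_simple_mul (π ω) i).resolve_right (by omega)
  have hk' := (cs.length_mul_simple (π ω) k).resolve_right (by omega)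
  obtain ⟨j, hj, hexch⟩ := exists_eraseIdx_of_isLeftInversion cs (ω := ω ++ [k])
    ⟨cs.isReflection_simple i, by
      rw [cs.wordProd_append, cs.wordProd_singleton, ← mul_assoc]; omega⟩
  rw [List.length_append, List.length_singleton] at hj
  rw [cs.wordProd_append, cs.wordProd_singleton] at hexch
  -- the deleted letter must be the last one, otherwise `s i * w` would be too short
  rcases lt_or_ge j ω.length with hjω | hjω
  · rw [List.eraseIdx_append_of_lt_length hjω, cs.wordProd_append, cs.wordProd_singleton,
      ← mul_assoc] at hexch
    have hshort := length_wordProd_eraseIdx_lt cs hjω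
    rw [mul_right_cancel hexch] at hi
    have := hω.eq
    omega
  · rw [List.eraseIdx_append_of_length_le hjω, show j - ω.length = 0 by omega] at hexch
    simp only [List.eraseIdx_cons_zero, List.append_nil] at hexch
    calc s i * π ω = s i * (π ω * s k) * s k := by
          rw [← mul_assoc, cs.simple_mul_simple_cancel_right]
      _ = π ω * s k := by rw [hexch]

theorem simple_mem_stSubgroup {i j r : B} (hr : r = i ∨ r = j) : s r ∈ stSubgroup cs i j :=
  Subgroup.subset_closure (by rcases hr with rfl | rfl <;> simp)

theorem exists_isReduced_of_mem_stSubgroup {i j : B} {w : W} (hw : w ∈ stSubgroup cs i j) :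
    ∃ ω : List B, cs.IsReduced ω ∧ (∀ r ∈ ω, r = i ∨ r = j) ∧ π ω = w := by
  have step : ∀ c, c = i ∨ c = j → ∀ y : W,
      (∃ ω : List B, cs.IsReduced ω ∧ (∀ r ∈ ω, r = i ∨ r = j) ∧ π ω = y) →
      ∃ ω : List B, cs.IsReduced ω ∧ (∀ r ∈ ω, r = i ∨ r = j) ∧ π ω = s c * y := by
    rintro c hc _ ⟨ω, hω, hωij, rfl⟩
    rcases cs.length_simple_mul (π ω) c with hup | hdown
    · refine ⟨c :: ω, ?_, ?_, cs.wordProd_cons c ω⟩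
      · rw [CoxeterSystem.IsReduced, cs.wordProd_cons, hup, hω, List.length_cons]
      · simpa [hc] using hωij
    · obtain ⟨k, hk, hexch⟩ := exists_eraseIdx_of_isLeftInversion cs (ω := ω)
        ⟨cs.isReflection_simple c, by omega⟩
      refine ⟨ω.eraseIdx k, ?_, fun r hr => hωij r (List.mem_of_mem_eraseIdx hr), hexch.symm⟩
      rw [CoxeterSystem.IsReduced, ← hexch, List.length_eraseIdx_of_lt hk, ← hω]
      omega
  induction hw using Subgroup.closure_induction_left with
  | one => exact ⟨[], by simp [CoxeterSystem.IsReduced], by simp, rfl⟩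
  | mul_left x hx y _ ih =>
    rcases hx with rfl | rfl
    exacts [step i (.inl rfl) y ih, step j (.inr rfl) y ih]
  | inv_mul_cancel x hx y _ ih =>
    rcases hx with rfl | rfl
    exacts [by simpa using step i (.inl rfl) y ih, by simpa using step j (.inr rfl) y ih]

theorem wordProd_mem_stSubgroup {i j : B} {ω : List B} (hω : ∀ r ∈ ω, r = i ∨ r = j) :
    π ω ∈ stSubgroup cs i j := by
  induction ω with
  | nil => exact one_mem _
  | cons r ω ih =>
    rw [cs.wordProd_cons]
    exact mul_mem (simple_mem_stSubgroup cs (hω r List.mem_cons_self))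
      (ih fun r hr => hω r (List.mem_cons_of_mem _ hr))

theorem exists_isLeftDescent_of_mem_stSubgroup {i j : B} {w : W} (hw : w ∈ stSubgroup cs i j)
    (hne : w ≠ 1) : ∃ c, (c = i ∨ c = j) ∧ cs.IsLeftDescent w c := by
  obtain ⟨_ | ⟨c, ω⟩, hω, hωij, rfl⟩ := exists_isReduced_of_mem_stSubgroup cs hw
  · exact absurd rfl hne
  refine ⟨c, hωij c List.mem_cons_self, ?_⟩
  rw [IsLeftDescent, cs.wordProd_cons, cs.simple_mul_simple_cancel_left, ← cs.wordProd_cons, hω]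
  exact (cs.length_wordProd_le ω).trans_lt (by simp)

theorem length_mul_eq_add_of_forall_length_le {i j : B} {x : W}
    (hmin : ∀ v ∈ stSubgroup cs i j, ℓ x ≤ ℓ (v * x)) {w : W}
    (hw : w ∈ stSubgroup cs i j) :
    ℓ (w * x) = ℓ w + ℓ x := by
  obtain ⟨ω, hω, hωij, rfl⟩ := exists_isReduced_of_mem_stSubgroup cs hw
  rw [hω]
  clear hw
  induction ω with
  | nil => simp
  | cons c ω ih =>
    have hωij' : ∀ r ∈ ω, r = i ∨ r = j := fun r hr => hωij r (List.mem_cons_of_mem c hr)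
    have ih := ih (by simpa using hω.drop 1) hωij'
    have hc := hωij c List.mem_cons_self
    rw [cs.wordProd_cons, mul_assoc, List.length_cons]
    rcases cs.length_simple_mul (π ω * x) c with hup | hdown
    · omega
    exfalso
    obtain ⟨ξ, hξ, rfl⟩ := cs.exists_isReduced x
    obtain ⟨k, hk, hexch⟩ := exists_eraseIdx_of_isLeftInversion cs (ω := ω ++ ξ)
      ⟨cs.isReflection_simple c, by rw [cs.wordProd_append]; omega⟩
    rw [List.length_append] at hk
    rw [cs.wordProd_append] at hexch
    -- deleting a letter of `ω` shortens the reduced word `c :: ω`; deleting a letter of `ξ`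
    -- shortens `x` by an element of `W_{i,j}`
    rcases lt_or_ge k ω.length with hkω | hkω
    · rw [List.eraseIdx_append_of_lt_length hkω, cs.wordProd_append, ← mul_assoc] at hexch
      have hshort := length_wordProd_eraseIdx_lt cs hkω
      have hlen : ℓ (π (c :: ω)) = ω.length + 1 := hω
      rw [cs.wordProd_cons, mul_right_cancel hexch] at hlen
      omega
    · rw [List.eraseIdx_append_of_length_le hkω, cs.wordProd_append] at hexch
      have hconj : (π ω)⁻¹ * s c * π ω * π ξ = π (ξ.eraseIdx (k - ω.length)) := by
        simp only [mul_assoc]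
        rw [hexch, inv_mul_cancel_left]
      have hshort := length_wordProd_eraseIdx_lt cs (ω := ξ) (j := k - ω.length) (by omega)
      have hωK := wordProd_mem_stSubgroup cs hωij'
      have := hmin _ (mul_mem (mul_mem (inv_mem hωK) (simple_mem_stSubgroup cs hc)) hωK)
      rw [hconj, hξ] at this
      omega

theorem length_mul_of_mem_minRepLeft_s7 {i j : B} {x : W} (hx : x ∈ minRepLeft cs {i, j}) {w : W}
    (hw : w ∈ stSubgroup cs i j) : ℓ (w * x) = ℓ w + ℓ x := by
  -- `w₀ * x` is a shortest element of `W_{i,j} x`; a left descent of `w₀⁻¹` in `{i, j}`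
  -- would be a left descent of `x`
  let K := stSubgroup cs i j
  let w₀ := Function.argminOn (fun v : W => ℓ (v * x)) (K : Set W) ⟨1, K.one_mem⟩
  have hw₀ : w₀ ∈ K := Function.argminOn_mem ..
  have hadd : ∀ v ∈ K, ℓ (v * (w₀ * x)) = ℓ v + ℓ (w₀ * x) :=
    fun v hv => length_mul_eq_add_of_forall_length_le cs (fun u hu => by
      rw [← mul_assoc]
      exact Function.argminOn_le (fun v : W => ℓ (v * x)) _ (mul_mem hu hw₀)) hv
  have hw₀1 : w₀ = 1 := by
    by_contra hne
    obtain ⟨c, hc, hdesc⟩ :=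
      exists_isLeftDescent_of_mem_stSubgroup cs (inv_mem hw₀) (inv_ne_one.mpr hne)
    have h1 := hadd _ (inv_mem hw₀)
    have h2 := hadd _ (mul_mem (simple_mem_stSubgroup cs hc) (inv_mem hw₀))
    rw [inv_mul_cancel_left] at h1
    rw [mul_assoc, inv_mul_cancel_left] at h2
    have h3 := hx c (by rcases hc with rfl | rfl <;> simp)
    rw [IsLeftDescent] at hdesc
    omega
  simpa [hw₀1] using hadd w hw

theorem not_isReduced_append_pair (ω : List B) (i : B) : ¬ cs.IsReduced (ω ++ [i, i]) := by
  intro h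
  have := cs.length_wordProd_le ω
  rw [CoxeterSystem.IsReduced, cs.wordProd_append, cs.wordProd_cons, cs.wordProd_singleton,
    cs.simple_mul_simple_self, mul_one, List.length_append] at h
  simp at h
  omega

theorem alternatingWord_append_singleton {i j c : B} {n : ℕ} (hc : c = i ∨ c = j)
    (hred : cs.IsReduced (alternatingWord i j n ++ [c])) :
    alternatingWord i j n ++ [c] = alternatingWord i j (n + 1) ∨
      alternatingWord i j n ++ [c] = alternatingWord j i (n + 1) := by
  rcases hc with rfl | rfl
  · exact .inr (List.concat_eq_append ..).symm
  · cases n with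
    | zero => exact .inl rfl
    | succ m =>
      rw [alternatingWord_succ, List.concat_eq_append, List.append_assoc] at hred
      exact absurd hred (not_isReduced_append_pair cs _ _)

theorem eq_alternatingWord_of_isReduced {i j : B} {ω : List B} (hω : cs.IsReduced ω)
    (hij : ∀ r ∈ ω, r = i ∨ r = j) :
    ω = alternatingWord i j ω.length ∨ ω = alternatingWord j i ω.length := by
  induction ω using List.reverseRecOn with
  | nil => exact .inl rfl
  | append_singleton ω c ih =>
    have hc := hij c (by simp)
    rw [List.length_append, List.length_singleton]
    generalize hn : ω.length = n at ih
    rcases ih (by simpa using hω.take ω.length) (fun r hr => hij r (by simp [hr])) with h | h <;>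
      subst h
    · exact alternatingWord_append_singleton cs hc hω
    · exact (alternatingWord_append_singleton cs hc.symm hω).symm

theorem wordProd_alternatingWord_of_forall_isLeftDescent {i j : B} {z : W}
    (hz : z ∈ stSubgroup cs i j) (hdesc : ∀ c, c = i ∨ c = j → cs.IsLeftDescent z c) :
    π (alternatingWord i j (ℓ z)) = z ∧ π (alternatingWord j i (ℓ z)) = z := by
  have word (c : B) (hc : c = i ∨ c = j) : ∃ ρ : List B,
      (c :: ρ = alternatingWord i j (ℓ z) ∨ c :: ρ = alternatingWord j i (ℓ z)) ∧
        π (c :: ρ) = z := by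
    obtain ⟨ρ, hρ, hρij, hρz⟩ :=
      exists_isReduced_of_mem_stSubgroup cs (mul_mem (simple_mem_stSubgroup cs hc) hz)
    have hlen : ℓ z = ρ.length + 1 := by
      have := hdesc c hc
      rw [IsLeftDescent, ← hρz, hρ] at this
      rcases cs.length_simple_mul z c with h | h <;> rw [← hρz, hρ] at h <;> omega
    have hπ : π (c :: ρ) = z := by rw [cs.wordProd_cons, hρz, cs.simple_mul_simple_cancel_left]
    have hred : cs.IsReduced (c :: ρ) := by
      rw [CoxeterSystem.IsReduced, hπ, hlen, List.length_cons]
    refine ⟨ρ, ?_, hπ⟩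
    have := eq_alternatingWord_of_isReduced cs (i := i) (j := j) hred (by simpa [hc] using hρij)
    rwa [List.length_cons, ← hlen] at this
  -- `i :: ρi` and `j :: ρj` are different alternating words unless `i = j`
  obtain ⟨ρi, hi | hi, hπi⟩ := word i (.inl rfl) <;>
    obtain ⟨ρj, hj | hj, hπj⟩ := word j (.inr rfl)
  · obtain rfl : i = j := (List.cons_eq_cons.mp (hi.trans hj.symm)).1
    exact ⟨hi ▸ hπi, hi ▸ hπi⟩
  · exact ⟨hi ▸ hπi, hj ▸ hπj⟩
  · exact ⟨hj ▸ hπj, hi ▸ hπi⟩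
  · obtain rfl : i = j := (List.cons_eq_cons.mp (hi.trans hj.symm)).1
    exact ⟨hi ▸ hπi, hi ▸ hπi⟩

theorem length_le_of_forall_isLeftDescent {i j : B} {z : W} (hz : z ∈ stSubgroup cs i j)
    (hdesc : ∀ c, c = i ∨ c = j → cs.IsLeftDescent z c) {w : W}
    (hw : w ∈ stSubgroup cs i j) : ℓ w ≤ ℓ z := by
  by_contra! hlt
  obtain ⟨ρ, hρ, hρij, rfl⟩ := exists_isReduced_of_mem_stSubgroup cs hw
  have hτ := hρ.take (ℓ z + 1)
  have hτlen : (ρ.take (ℓ z + 1)).length = ℓ z + 1 := by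
    rw [List.length_take, ← hρ.eq]
    omega
  have hτij : ∀ r ∈ ρ.take (ℓ z + 1), r = i ∨ r = j :=
    fun r hr => hρij r (List.mem_of_mem_take hr)
  obtain ⟨c, α, hτα, hα⟩ : ∃ c α, ρ.take (ℓ z + 1) = c :: α ∧ π α = z := by
    have hprod := wordProd_alternatingWord_of_forall_isLeftDescent cs hz hdesc
    rcases eq_alternatingWord_of_isReduced cs hτ hτij with h | h <;>
      rw [hτlen, alternatingWord_succ'] at h
    exacts [⟨_, _, h, hprod.1⟩, ⟨_, _, h, hprod.2⟩]
  have hshort := hdesc c (hτij c (by simp [hτα]))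
  have hτred := hτ.eq
  rw [hτlen, hτα, cs.wordProd_cons, hα] at hτred
  rw [IsLeftDescent] at hshort
  omega

theorem finite_stSubgroup_of_length_le {i j : B} {n : ℕ}
    (hn : ∀ w ∈ stSubgroup cs i j, ℓ w ≤ n) : (stSubgroup cs i j : Set W).Finite := by
  refine (((Set.finite_Iic n).image fun k => π (alternatingWord i j k)).union
    ((Set.finite_Iic n).image fun k => π (alternatingWord j i k))).subset fun w hw => ?_
  obtain ⟨ρ, hρ, hρij, rfl⟩ := exists_isReduced_of_mem_stSubgroup cs hw
  have hle : ρ.length ≤ n := hρ.eq ▸ hn _ hw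
  rcases eq_alternatingWord_of_isReduced cs hρ hρij with h | h
  · exact .inl ⟨ρ.length, hle, congrArg cs.wordProd h.symm⟩
  · exact .inr ⟨ρ.length, hle, congrArg cs.wordProd h.symm⟩

theorem length_inv_mul_simple_mul_le_one {H : Set B} {i j : B} {x : W}
    (hx : x ∈ minRepLeft cs {i, j}) {g : W} (hg : g ∈ stSubgroup cs i j) {p : B}
    (hp : p = i ∨ p = j) (hpd : ℓ g < ℓ (s p * g)) (hgx : g * x ∈ minRep cs H)
    (hpgx : s p * g * x ∉ minRep cs H) : ℓ (g⁻¹ * s p * g) ≤ 1 := by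
  have hpg : s p * g ∈ stSubgroup cs i j := mul_mem (simple_mem_stSubgroup cs hp) hg
  obtain ⟨h, hH, hh⟩ : ∃ h ∈ H, ℓ (s p * g * x * s h) < ℓ (s p * g * x) := by
    simp only [minRep, Set.mem_ofPred_eq, not_forall, not_lt] at hpgx
    obtain ⟨h, hH, hle⟩ := hpgx
    exact ⟨h, hH, hle.lt_of_ne (cs.length_mul_simple_ne _ h)⟩
  have hcomm : s p * (g * x) = g * x * s h := by
    refine simple_mul_eq_mul_simple_of_length_lt cs ?_ (hgx h hH) (by rwa [← mul_assoc])
    rw [← mul_assoc, length_mul_of_mem_minRepLeft_s7 cs hx hpg,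
      length_mul_of_mem_minRepLeft_s7 cs hx hg]
    omega
  -- `(g⁻¹ * s p * g) * x = x * s h`, and lengths add on the left of `x`
  have hadd := length_mul_of_mem_minRepLeft_s7 cs hx
    (mul_mem (mul_mem (inv_mem hg) (simple_mem_stSubgroup cs hp)) hg)
  rw [mul_assoc, mul_assoc, hcomm, mul_assoc g, inv_mul_cancel_left] at hadd
  have := cs.length_mul_le x (s h)
  rw [cs.length_simple] at this
  omega

theorem isLeftDescent_simple_mul_of_length_inv_mul_simple_mul_le_one {i j : B} {g : W}
    (hg : g ∈ stSubgroup cs i j) (hg1 : g ≠ 1) {p : B} (hp : p = i ∨ p = j)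
    (hpd : ℓ g < ℓ (s p * g)) (hconj : ℓ (g⁻¹ * s p * g) ≤ 1) {c : B}
    (hc : c = i ∨ c = j) : cs.IsLeftDescent (s p * g) c := by
  obtain ⟨o, ho, hog⟩ := exists_isLeftDescent_of_mem_stSubgroup cs hg hg1
  have hop : o ≠ p := by rintro rfl; exact absurd hog (by unfold IsLeftDescent; omega)
  obtain rfl | rfl : c = p ∨ c = o := by
    rcases hp with rfl | rfl <;> rcases ho with rfl | rfl <;> rcases hc with rfl | rfl <;> tauto
  · rw [IsLeftDescent, cs.simple_mul_simple_cancel_left]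
    exact hpd
  · have := cs.length_mul_le (s c * g) (g⁻¹ * s p * g)
    rw [show s c * g * (g⁻¹ * s p * g) = s c * (s p * g) by group] at this
    rw [IsLeftDescent] at hog ⊢
    omega

end Coxeter

/-- if `x ∈ ^{{s,t}}W`, `g ∈ W_{{s,t}} \ {e}`, `p ∈ {s,t}` is not
a left descent of `g`, `g·x ∈ W^H` and `p·g·x ∉ W^H`, then `p·g` is the longest
element of `W_{{s,t}}`; in particular `W_{{s,t}}` is finite. -/
theorem longest_element_of_not_minRep
    {B : Type*} {W : Type*} [Group W] {M : CoxeterMatrix B} (cs : CoxeterSystem M W)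
    (H : Set B) (s t : B) (x : W) (hx : x ∈ minRepLeft cs {s, t})
    (g : W) (hg : g ∈ stSubgroup cs s t) (hg1 : g ≠ 1)
    (p : B) (hp : p = s ∨ p = t)
    (hpd : cs.length g < cs.length (cs.simple p * g))
    (hgx : g * x ∈ minRep cs H)
    (hpgx : cs.simple p * g * x ∉ minRep cs H) :
    (cs.simple p * g ∈ stSubgroup cs s t ∧
      ∀ h ∈ stSubgroup cs s t, cs.length h ≤ cs.length (cs.simple p * g)) ∧
    (stSubgroup cs s t : Set W).Finite := by
  have hpg : cs.simple p * g ∈ stSubgroup cs s t := mul_mem (simple_mem_stSubgroup cs hp) hg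
  have hconj := length_inv_mul_simple_mul_le_one cs hx hg hp hpd hgx hpgx
  have hmax (w : W) (hw : w ∈ stSubgroup cs s t) : cs.length w ≤ cs.length (cs.simple p * g) :=
    length_le_of_forall_isLeftDescent cs hpg
      (fun c hc => isLeftDescent_simple_mul_of_length_inv_mul_simple_mul_le_one cs hg hg1 hp hpd
        hconj hc) hw
  exact ⟨⟨hpg, hmax⟩, finite_stSubgroup_of_length_le cs hmax⟩

end CIKL
end
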